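/- Let (N, ≿) be a Bakers and Millers game with types θ_1, …, θ_t and let d = gcd(|θ_1|, …, |θ_t|). Then: (a) a partition π of N is in the strict core if and only if for every block S ∈ π there is a positive integer k_S with |S ∩ θ_i| = k_S · |θ_i| / d for every i ∈ {1, …, t}; and (b) there exists a partition in the strict core consisting of exactly d blocks, each block S of which satisfies |S ∩ θ_i| = |θ_i| / d for every i; no partition in the strict core has a block of smaller cardinality than these. -/

import Mathlib

open Finset
open scoped Classical

variable {V : Type*} [Fintype V] [DecidableEq V]

/-- The utility of player `i` in coalition `S` in the simple symmetric fractional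
hedonic game given by the graph `G`: the number of neighbors of `i` in `S`
divided by the size of `S`. -/
noncomputable def util (G : SimpleGraph V) (i : V) (S : Finset V) : ℚ :=
  ((S.filter fun j => G.Adj i j).card : ℚ) / (S.card : ℚ)

/-- A partition of the player set `V`, given by the block `part i` of each player `i`. -/
structure PlayerPartition (V : Type*) [Fintype V] [DecidableEq V] where
  part : V → Finset V
  mem_part : ∀ i, i ∈ part i
  part_eq : ∀ i j, j ∈ part i → part j = part i

/-- A nonempty coalition `S` blocks `π` if every member is strictly better off in `S`. -/
def Blocks (G : SimpleGraph V) (π : PlayerPartition V) (S : Finset V) : Prop :=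
  S.Nonempty ∧ ∀ i ∈ S, util G i (π.part i) < util G i S

/-- A partition is in the core if no nonempty coalition blocks it. -/
def InCore (G : SimpleGraph V) (π : PlayerPartition V) : Prop :=
  ∀ S : Finset V, ¬ Blocks G π S

/-- A nonempty coalition `S` weakly blocks `π` if every member is weakly better off
in `S` and some member is strictly better off. -/
def WeaklyBlocks (G : SimpleGraph V) (π : PlayerPartition V) (S : Finset V) : Prop :=
  S.Nonempty ∧ (∀ i ∈ S, util G i (π.part i) ≤ util G i S) ∧
    ∃ j ∈ S, util G j (π.part j) < util G j S

/-- A partition is in the strict core if no nonempty coalition weakly blocks it. -/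
def InStrictCore (G : SimpleGraph V) (π : PlayerPartition V) : Prop :=
  ∀ S : Finset V, ¬ WeaklyBlocks G π S

/-- The complete multipartite graph of a Bakers and Millers game: the players `V`
are assigned types by `type : V → T`, and distinct players are adjacent iff they
have different types. -/
def bmGraph {V T : Type*} (type : V → T) : SimpleGraph V where
  Adj i j := type i ≠ type j
  symm := ⟨fun _ _ h => Ne.symm h⟩
  loopless := ⟨fun _ h => h rfl⟩

/-! In a Bakers and Millers game a player's utility in a coalition is one minus the share of
its own type there, so preferences only compare own-type shares.

If every block has the type proportions of the whole player set, a weakly blocking coalition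
`S` would give each type present in it a share at most the global one, and a strictly smaller
one for some type; summing over types gives `1 < 1`.

Conversely, let `π` be in the strict core. Swapping a player into the block of another player of
the same type shows that all blocks give a type present in them the same share; merging a block
lacking a type with a block containing it would then weakly block, so every block contains every
type. Averaging the now constant share over all players identifies it with the global share.
The gcd condition is the integral form of proportionality, and a strict core partition into `d`
blocks is obtained by cutting every type class into `d` equal pieces. -/

section TypeShare

noncomputable def typeCount {α T : Type*} (type : α → T) (S : Finset α) (t : T) : ℕ :=
  #(S.filter fun x => type x = t)

noncomputable def typeShare {α T : Type*} (type : α → T) (S : Finset α) (t : T) : ℚ :=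
  typeCount type S t / #S

variable {α T : Type*} {type : α → T}

lemma typeCount_pos_iff {S : Finset α} {t : T} :
    0 < typeCount type S t ↔ ∃ x ∈ S, type x = t := by
  simp [typeCount, card_pos, Finset.Nonempty]

lemma typeCount_union [DecidableEq α] {A B : Finset α} (hAB : Disjoint A B) (t : T) :
    typeCount type (A ∪ B) t = typeCount type A t + typeCount type B t := by
  rw [typeCount, filter_union, card_union_of_disjoint (disjoint_filter_filter hAB)]
  rfl

lemma sum_typeCount [Fintype T] (S : Finset α) : ∑ t, typeCount type S t = #S :=
  (card_eq_sum_card_fiberwise fun x _ => mem_univ (type x)).symm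

lemma typeShare_nonneg (S : Finset α) (t : T) : 0 ≤ typeShare type S t := by
  unfold typeShare
  positivity

lemma typeShare_eq_zero_of_forall_ne {S : Finset α} {t : T} (h : ∀ x ∈ S, type x ≠ t) :
    typeShare type S t = 0 := by
  have : typeCount type S t = 0 := Nat.eq_zero_of_not_pos fun hpos => by
    obtain ⟨x, hx, rfl⟩ := typeCount_pos_iff.1 hpos
    exact h x hx rfl
  simp [typeShare, this]

lemma typeShare_pos_of_mem {S : Finset α} {x : α} (hx : x ∈ S) :
    0 < typeShare type S (type x) := by
  have : 0 < typeCount type S (type x) := typeCount_pos_iff.2 ⟨x, hx, rfl⟩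
  have : 0 < #S := card_pos.2 ⟨x, hx⟩
  unfold typeShare
  positivity

lemma sum_typeShare [Fintype T] {S : Finset α} (hS : S.Nonempty) :
    ∑ t, typeShare type S t = 1 := by
  have : (#S : ℚ) ≠ 0 := by exact_mod_cast hS.card_pos.ne'
  simp only [typeShare, ← sum_div]
  rw [← Nat.cast_sum, sum_typeCount, div_self this]

lemma typeShare_map_of_type_apply_eq (σ : α ≃ α) (hσ : ∀ x, type (σ x) = type x)
    (S : Finset α) (t : T) : typeShare type (S.map σ.toEmbedding) t = typeShare type S t := by
  simp [typeShare, typeCount, filter_map, hσ]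

lemma typeShare_union_le [DecidableEq α] {A B : Finset α} {t : T} (hAB : Disjoint A B)
    (hA : A.Nonempty) (hB : B.Nonempty) (h : typeShare type B t ≤ typeShare type A t) :
    typeShare type (A ∪ B) t ≤ typeShare type A t := by
  have hA' : (0 : ℚ) < #A := by exact_mod_cast hA.card_pos
  have hB' : (0 : ℚ) < #B := by exact_mod_cast hB.card_pos
  unfold typeShare at h ⊢
  rw [typeCount_union hAB, card_union_of_disjoint hAB, Nat.cast_add, Nat.cast_add]
  rw [div_le_div_iff₀ hB' hA'] at h
  rw [div_le_div_iff₀ (by positivity) hA']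
  linarith

lemma typeShare_union_lt [DecidableEq α] {A B : Finset α} {t : T} (hAB : Disjoint A B)
    (hA : A.Nonempty) (hB : B.Nonempty) (h : typeShare type A t < typeShare type B t) :
    typeShare type (A ∪ B) t < typeShare type B t := by
  have hA' : (0 : ℚ) < #A := by exact_mod_cast hA.card_pos
  have hB' : (0 : ℚ) < #B := by exact_mod_cast hB.card_pos
  unfold typeShare at h ⊢
  rw [typeCount_union hAB, card_union_of_disjoint hAB, Nat.cast_add, Nat.cast_add]
  rw [div_lt_div_iff₀ hA' hB'] at h
  rw [div_lt_div_iff₀ (by positivity) hB']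
  linarith

lemma util_bmGraph (i : α) {S : Finset α} (hS : S.Nonempty) :
    util (bmGraph type) i S = 1 - typeShare type S (type i) := by
  have hS' : (#S : ℚ) ≠ 0 := by exact_mod_cast hS.card_pos.ne'
  have hadj : S.filter (fun j => (bmGraph type).Adj i j) = S.filter fun j => ¬type j = type i :=
    filter_congr fun j _ => ne_comm
  have hsplit := card_filter_add_card_filter_not (s := S) (p := fun j => type j = type i)
  rw [util, typeShare, typeCount, hadj, eq_sub_iff_add_eq, ← add_div, ← Nat.cast_add, add_comm,
    hsplit, div_self hS']

end TypeShare

namespace PlayerPartition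

lemma part_nonempty (π : PlayerPartition V) (i : V) : (π.part i).Nonempty :=
  ⟨i, π.mem_part i⟩

lemma mem_part_comm (π : PlayerPartition V) {i j : V} : j ∈ π.part i ↔ i ∈ π.part j :=
  ⟨fun h => π.part_eq i j h ▸ π.mem_part i, fun h => π.part_eq j i h ▸ π.mem_part j⟩

lemma disjoint_part (π : PlayerPartition V) {i j : V} (h : j ∉ π.part i) :
    Disjoint (π.part i) (π.part j) := by
  refine disjoint_left.2 fun u hi hj => h ?_
  rw [← π.part_eq i u hi, π.part_eq j u hj]
  exact π.mem_part j

lemma sum_div_card_part (π : PlayerPartition V) (f : V → ℚ) :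
    ∑ j, (∑ u ∈ π.part j, f u) / #(π.part j) = ∑ u, f u := by
  calc ∑ j, (∑ u ∈ π.part j, f u) / #(π.part j)
      = ∑ j, ∑ u ∈ π.part j, f u / #(π.part u) := by
        refine sum_congr rfl fun j _ => ?_
        rw [sum_div]
        exact sum_congr rfl fun u hu => by rw [π.part_eq j u hu]
    _ = ∑ u, ∑ j ∈ π.part u, f u / #(π.part u) :=
        sum_comm' fun j u => by simp [π.mem_part_comm]
    _ = ∑ u, f u := by
        refine sum_congr rfl fun u _ => ?_
        have : (#(π.part u) : ℚ) ≠ 0 := by exact_mod_cast (π.part_nonempty u).card_pos.ne'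
        rw [sum_const, nsmul_eq_mul]
        field_simp

noncomputable def ofFun {ι : Type*} [DecidableEq ι] (f : V → ι) : PlayerPartition V where
  part i := univ.filter fun j => f j = f i
  mem_part i := by simp
  part_eq i j hj := by rw [(mem_filter.1 hj).2]

lemma card_image_ofFun_part {ι : Type*} [DecidableEq ι] (f : V → ι) :
    #(univ.image (ofFun f).part) = #(univ.image f) := by
  have himage : univ.image (ofFun f).part =
      (univ.image f).image fun r => univ.filter fun j => f j = r := by
    rw [image_image]
    rfl
  rw [himage, card_image_of_injOn]
  rintro _ hr r' - heq
  obtain ⟨x, -, rfl⟩ := mem_image.1 hr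
  have hx : x ∈ univ.filter fun j => f j = f x := by simp
  rw [show (univ.filter fun j => f j = f x) = univ.filter fun j => f j = r' from heq] at hx
  exact (mem_filter.1 hx).2

lemma sum_typeShare_part {T : Type*} (π : PlayerPartition V) (type : V → T) (t : T) :
    ∑ j, typeShare type (π.part j) t = typeCount type univ t := by
  simp only [typeShare, typeCount, natCast_card_filter]
  exact π.sum_div_card_part _

end PlayerPartition

section StrictCore

variable {T : Type*} {type : V → T}

lemma weaklyBlocks_bmGraph_iff (π : PlayerPartition V) {S : Finset V} (hS : S.Nonempty) :
    WeaklyBlocks (bmGraph type) π S ↔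
      (∀ i ∈ S, typeShare type S (type i) ≤ typeShare type (π.part i) (type i)) ∧
        ∃ j ∈ S, typeShare type S (type j) < typeShare type (π.part j) (type j) := by
  have hS' : ∀ i, util (bmGraph type) i S = 1 - typeShare type S (type i) :=
    fun i => util_bmGraph i hS
  have hπ : ∀ i, util (bmGraph type) i (π.part i) = 1 - typeShare type (π.part i) (type i) :=
    fun i => util_bmGraph i (π.part_nonempty i)
  simp only [WeaklyBlocks, hS', hπ, sub_le_sub_iff_left, sub_lt_sub_iff_left, hS, true_and]

theorem inStrictCore_of_typeShare_eq [Fintype T] {π : PlayerPartition V}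
    (h : ∀ i t, typeShare type (π.part i) t = typeShare type univ t) :
    InStrictCore (bmGraph type) π := by
  rintro S hS
  obtain ⟨hle, j, hj, hlt⟩ := (weaklyBlocks_bmGraph_iff π hS.1).1 hS
  have hle_univ : ∀ t, typeShare type S t ≤ typeShare type univ t := by
    intro t
    by_cases ht : ∃ i ∈ S, type i = t
    · obtain ⟨i, hi, rfl⟩ := ht
      exact (hle i hi).trans_eq (h i _)
    · push Not at ht
      rw [typeShare_eq_zero_of_forall_ne ht]
      exact typeShare_nonneg _ _
  have hsum := sum_lt_sum (fun t _ => hle_univ t) ⟨type j, mem_univ _, hlt.trans_eq (h j _)⟩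
  rw [sum_typeShare hS.1, sum_typeShare ⟨j, mem_univ j⟩] at hsum
  exact hsum.false

namespace InStrictCore

variable {π : PlayerPartition V} (hπ : InStrictCore (bmGraph type) π)
include hπ

/-- If `j` had the larger own-type share, swapping `i` and `j` would turn the block of `i` into
a coalition of the same composition that `j` strictly prefers. -/
lemma typeShare_part_le_of_type_eq {i j : V} (h : type i = type j) :
    typeShare type (π.part j) (type j) ≤ typeShare type (π.part i) (type i) := by
  by_contra! hlt
  rw [h] at hlt
  have hj : j ∉ π.part i := fun hj => by rw [π.part_eq i j hj] at hlt; exact hlt.false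
  have hσ : ∀ x, type (Equiv.swap i j x) = type x := by
    intro x
    rw [Equiv.swap_apply_def]
    split_ifs <;> simp_all
  set S := (π.part i).map (Equiv.swap i j).toEmbedding
  have hS : ∀ t, typeShare type S t = typeShare type (π.part i) t :=
    typeShare_map_of_type_apply_eq _ hσ _
  have hjS : j ∈ S := mem_map_equiv.2 (by simpa using π.mem_part i)
  apply hπ S
  rw [weaklyBlocks_bmGraph_iff π ⟨j, hjS⟩]
  refine ⟨fun u hu => ?_, j, hjS, by rwa [hS]⟩
  rcases eq_or_ne u j with rfl | hu_ne
  · rw [hS]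
    exact hlt.le
  · have hu_mem : u ∈ π.part i := by
      rw [mem_map_equiv, Equiv.symm_swap, Equiv.swap_apply_def] at hu
      split_ifs at hu with hui
      · exact absurd hu hj
      · exact hu
    rw [hS, π.part_eq i u hu_mem]

lemma typeShare_part_le (u j : V) :
    typeShare type (π.part j) (type u) ≤ typeShare type (π.part u) (type u) := by
  by_cases hex : ∃ v ∈ π.part j, type v = type u
  · obtain ⟨v, hv, hvu⟩ := hex
    have := hπ.typeShare_part_le_of_type_eq hvu.symm
    rwa [π.part_eq j v hv, hvu] at this
  · push Not at hex
    rw [typeShare_eq_zero_of_forall_ne hex]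
    exact typeShare_nonneg _ _

/-- Otherwise merging the block of `i` with the block of `x` weakly blocks: the mediant of two
shares lies between them. -/
lemma exists_mem_part_type_eq (i x : V) : ∃ v ∈ π.part i, type v = type x := by
  by_contra! hno
  have hx : x ∉ π.part i := fun hx => hno x hx rfl
  have hdisj := π.disjoint_part hx
  have hi := π.part_nonempty i
  have hx' := π.part_nonempty x
  apply hπ (π.part i ∪ π.part x)
  rw [weaklyBlocks_bmGraph_iff π (hi.mono subset_union_left)]
  refine ⟨fun u hu => ?_, x, mem_union_right _ (π.mem_part x), ?_⟩
  · have hle := hπ.typeShare_part_le u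
    rcases mem_union.1 hu with hu | hu
    · rw [π.part_eq i u hu] at hle ⊢
      exact typeShare_union_le hdisj hi hx' (hle x)
    · rw [π.part_eq x u hu] at hle ⊢
      rw [union_comm]
      exact typeShare_union_le hdisj.symm hx' hi (hle i)
  · refine typeShare_union_lt hdisj hi hx' ?_
    rw [typeShare_eq_zero_of_forall_ne hno]
    exact typeShare_pos_of_mem (π.mem_part x)

lemma typeShare_part_eq (i : V) (t : T) :
    typeShare type (π.part i) t = typeShare type univ t := by
  by_cases ht : ∃ x, type x = t
  swap
  · push Not at ht
    rw [typeShare_eq_zero_of_forall_ne fun x _ => ht x,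
      typeShare_eq_zero_of_forall_ne fun x _ => ht x]
  obtain ⟨x, rfl⟩ := ht
  have hconst :
      ∀ j, typeShare type (π.part j) (type x) = typeShare type (π.part x) (type x) := by
    intro j
    obtain ⟨v, hv, hvx⟩ := hπ.exists_mem_part_type_eq j x
    have hge := hπ.typeShare_part_le v x
    rw [hvx, π.part_eq j v hv] at hge
    exact le_antisymm (hπ.typeShare_part_le x j) hge
  have hsum := π.sum_typeShare_part type (type x)
  rw [sum_congr rfl fun j _ => hconst j, sum_const, card_univ, nsmul_eq_mul] at hsum
  have hV : (Fintype.card V : ℚ) ≠ 0 := by exact_mod_cast (Fintype.card_pos_iff.2 ⟨x⟩).ne'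
  rw [hconst i]
  change _ = (typeCount type univ (type x) : ℚ) / #(univ : Finset V)
  rw [card_univ, eq_div_iff hV, mul_comm, hsum]

end InStrictCore

theorem inStrictCore_bmGraph_iff [Fintype T] {π : PlayerPartition V} :
    InStrictCore (bmGraph type) π ↔
      ∀ i t, typeShare type (π.part i) t = typeShare type univ t :=
  ⟨fun hπ => hπ.typeShare_part_eq, inStrictCore_of_typeShare_eq⟩

end StrictCore

section Proportionality

variable {α T : Type*} [Fintype α] {type : α → T}

lemma exists_typeCount_filter_eq_div {d : ℕ} (hd : ∀ t, d ∣ typeCount type univ t) :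
    ∃ f : α → Fin d, ∀ r t,
      typeCount type (univ.filter fun x => f x = r) t = typeCount type univ t / d := by
  have hcard : ∀ t, Fintype.card {x // type x = t} =
      Fintype.card (Fin d × Fin (typeCount type univ t / d)) := fun t => by
    rw [Fintype.card_subtype, Fintype.card_prod, Fintype.card_fin, Fintype.card_fin,
      Nat.mul_div_cancel' (hd t)]
    rfl
  let e t := Fintype.equivOfCardEq (hcard t)
  refine ⟨fun x => (e (type x) ⟨x, rfl⟩).1, fun r t => ?_⟩
  have he : ∀ x (hx : type x = t), (e (type x) ⟨x, rfl⟩).1 = (e t ⟨x, hx⟩).1 := by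
    rintro x rfl
    rfl
  rw [typeCount, filter_filter, ← card_fin (typeCount type univ t / d)]
  refine card_bij' (fun x hx => (e t ⟨x, (mem_filter.1 hx).2.2⟩).2)
    (fun q _ => ((e t).symm (r, q)).1) (fun _ _ => mem_univ _) (fun q _ => ?_)
    (fun x hx => ?_) (fun q _ => ?_)
  · have hq := ((e t).symm (r, q)).2
    refine mem_filter.2 ⟨mem_univ _, ?_, hq⟩
    dsimp only
    rw [he _ hq, Subtype.coe_eta, Equiv.apply_symm_apply]
  · obtain ⟨-, hxr, hxt⟩ := mem_filter.1 hx
    dsimp only at hxr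
    rw [he x hxt] at hxr
    subst hxr
    simp
  · simp

variable [Fintype T]

lemma gcd_typeCount_pos (x : α) : 0 < univ.gcd (typeCount type univ) :=
  Nat.pos_of_ne_zero fun h =>
    (typeCount_pos_iff.2 ⟨x, mem_univ x, rfl⟩).ne' (gcd_eq_zero_iff.1 h _ (mem_univ (type x)))

lemma card_eq_of_typeCount_eq {S : Finset α} {k d : ℕ}
    (h : ∀ t, (typeCount type S t : ℚ) = k * typeCount type univ t / d) :
    (#S : ℚ) = k * Fintype.card α / d := by
  rw [← sum_typeCount (type := type) S, Nat.cast_sum, sum_congr rfl fun t _ => h t, ← sum_div,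
    ← mul_sum, ← Nat.cast_sum, sum_typeCount, card_univ]

/-- With `d` the gcd of the type sizes, `|S| * d` is the gcd of the numbers
`|S| * |θ_t| = |S ∩ θ_t| * |N|`, hence a multiple `k * |N|` of `|N|`. -/
lemma typeShare_eq_iff_exists_typeCount_eq {S : Finset α} (hS : S.Nonempty) :
    (∀ t, typeShare type S t = typeShare type univ t) ↔
      ∃ k : ℕ, 0 < k ∧ ∀ t, (typeCount type S t : ℚ) =
        k * typeCount type univ t / univ.gcd (typeCount type univ) := by
  have hSpos : 0 < #S := hS.card_pos
  obtain ⟨x, -⟩ := hS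
  set d := univ.gcd (typeCount type univ)
  set n := Fintype.card α
  have hd : 0 < d := gcd_typeCount_pos x
  have hn : 0 < n := Fintype.card_pos_iff.2 ⟨x⟩
  have hdQ : (d : ℚ) ≠ 0 := by exact_mod_cast hd.ne'
  have hnQ : (n : ℚ) ≠ 0 := by exact_mod_cast hn.ne'
  constructor
  · intro h
    have hprop : ∀ t, typeCount type S t * n = typeCount type univ t * #S := fun t => by
      have := h t
      rw [typeShare, typeShare, card_univ, div_eq_div_iff (by positivity) hnQ] at this
      exact_mod_cast this
    have hgcd : univ.gcd (fun t => #S * typeCount type univ t) = #S * d := by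
      rw [Finset.gcd_mul_left, normalize_eq]
    obtain ⟨k, hk⟩ : n ∣ #S * d := by
      rw [← hgcd]
      exact dvd_gcd_iff.2 fun t _ =>
        ⟨typeCount type S t, by rw [mul_comm, ← hprop t, mul_comm]⟩
    refine ⟨k, Nat.pos_of_ne_zero fun hk0 => ?_, fun t => ?_⟩
    · rw [hk0, mul_zero] at hk
      exact (Nat.mul_pos hSpos hd).ne' hk
    · have hkQ : (#S : ℚ) * d = n * k := by exact_mod_cast hk
      have hpropQ : (typeCount type S t : ℚ) * n = typeCount type univ t * #S := by
        exact_mod_cast hprop t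
      rw [eq_div_iff hdQ]
      apply mul_left_cancel₀ hnQ
      linear_combination (d : ℚ) * hpropQ + (typeCount type univ t : ℚ) * hkQ
  · rintro ⟨k, hk, h⟩ t
    have hkQ : (k : ℚ) ≠ 0 := by exact_mod_cast hk.ne'
    rw [typeShare, typeShare, h t, card_eq_of_typeCount_eq h, card_univ]
    field_simp

lemma exists_partition_typeCount_eq_div [DecidableEq α] :
    ∃ π : PlayerPartition α, #(univ.image π.part) = univ.gcd (typeCount type univ) ∧
      ∀ i t, typeCount type (π.part i) t =
        typeCount type univ t / univ.gcd (typeCount type univ) := by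
  obtain ⟨f, hf⟩ := exists_typeCount_filter_eq_div (type := type) fun t => gcd_dvd (mem_univ t)
  refine ⟨PlayerPartition.ofFun f, ?_, fun i t => hf (f i) t⟩
  have hsurj : Function.Surjective f := by
    intro r
    obtain ⟨t, -, ht⟩ : ∃ t ∈ univ, typeCount type univ t ≠ 0 := by
      by_contra! h
      exact r.pos.ne' (gcd_eq_zero_iff.2 h)
    have hpos : 0 < typeCount type (univ.filter fun x => f x = r) t := by
      rw [hf]
      exact Nat.div_pos (Nat.le_of_dvd (Nat.pos_of_ne_zero ht) (gcd_dvd (mem_univ t))) r.pos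
    obtain ⟨x, hx, -⟩ := typeCount_pos_iff.1 hpos
    exact ⟨x, (mem_filter.1 hx).2⟩
  rw [PlayerPartition.card_image_ofFun_part, image_univ_of_surjective hsurj, card_fin]

end Proportionality

theorem stmt_8_general {T : Type*} [Fintype T] (type : V → T)
    (d : ℕ)
    (hd : d = (univ : Finset T).gcd fun t => (univ.filter fun i => type i = t).card) :
    (∀ π : PlayerPartition V,
        InStrictCore (bmGraph type) π ↔
          ∀ i : V, ∃ k : ℕ, 0 < k ∧ ∀ t : T,
            (((π.part i).filter fun x => type x = t).card : ℚ) =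
              (k : ℚ) * ((univ.filter fun x => type x = t).card : ℚ) / (d : ℚ)) ∧
      (∃ π : PlayerPartition V,
          InStrictCore (bmGraph type) π ∧
            (univ.image π.part).card = d ∧
            ∀ (i : V) (t : T),
              (((π.part i).filter fun x => type x = t).card : ℚ) =
                ((univ.filter fun x => type x = t).card : ℚ) / (d : ℚ)) ∧
      ∀ π' : PlayerPartition V, InStrictCore (bmGraph type) π' →
        ∀ i : V, (Fintype.card V : ℚ) / (d : ℚ) ≤ ((π'.part i).card : ℚ) := by
  subst hd
  have hcore : ∀ π : PlayerPartition V, InStrictCore (bmGraph type) π ↔ ∀ i, ∃ k : ℕ, 0 < k ∧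
      ∀ t, (typeCount type (π.part i) t : ℚ) =
        k * typeCount type univ t / univ.gcd (typeCount type univ) := fun π =>
    inStrictCore_bmGraph_iff.trans
      (forall_congr' fun i => typeShare_eq_iff_exists_typeCount_eq (π.part_nonempty i))
  refine ⟨hcore, ?_, fun π hπ i => ?_⟩
  · obtain ⟨π, hcard, hcount⟩ := exists_partition_typeCount_eq_div (type := type)
    have hcountQ : ∀ i t, (typeCount type (π.part i) t : ℚ) =
        typeCount type univ t / univ.gcd (typeCount type univ) := fun i t => by
      rw [hcount, Nat.cast_div (gcd_dvd (mem_univ t))]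
      exact_mod_cast (gcd_typeCount_pos i).ne'
    refine ⟨π, (hcore π).2 fun i => ⟨1, one_pos, fun t => ?_⟩, hcard, hcountQ⟩
    rw [hcountQ, Nat.cast_one, one_mul]
  · obtain ⟨k, hk, hcount⟩ := (hcore π).1 hπ i
    rw [card_eq_of_typeCount_eq hcount]
    refine div_le_div_of_nonneg_right (le_mul_of_one_le_left (Nat.cast_nonneg _) ?_)
      (Nat.cast_nonneg _)
    exact_mod_cast hk

/-- Let `d` be the gcd of the type sizes of a Bakers and Millers game. Then
(a) a partition is in the strict core iff each of its blocks `S` comes with a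
positive integer `k_S` such that `|S ∩ θ_t| = k_S ⬝ |θ_t| / d` for every type `t`;
(b) there is a strict core partition with exactly `d` blocks, each block `S` of
which satisfies `|S ∩ θ_t| = |θ_t| / d` for all `t`, and no strict core partition
has a block of cardinality smaller than these (whose common size is `|V| / d`). -/
theorem stmt_8 {T : Type*} [Fintype T] [Nonempty V] (type : V → T)
    (htypes : Function.Surjective type)
    (d : ℕ)
    (hd : d = (univ : Finset T).gcd fun t => (univ.filter fun i => type i = t).card) :
    (∀ π : PlayerPartition V,
        InStrictCore (bmGraph type) π ↔
          ∀ i : V, ∃ k : ℕ, 0 < k ∧ ∀ t : T,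
            (((π.part i).filter fun x => type x = t).card : ℚ) =
              (k : ℚ) * ((univ.filter fun x => type x = t).card : ℚ) / (d : ℚ)) ∧
      (∃ π : PlayerPartition V,
          InStrictCore (bmGraph type) π ∧
            (univ.image π.part).card = d ∧
            ∀ (i : V) (t : T),
              (((π.part i).filter fun x => type x = t).card : ℚ) =
                ((univ.filter fun x => type x = t).card : ℚ) / (d : ℚ)) ∧
      ∀ π' : PlayerPartition V, InStrictCore (bmGraph type) π' →
        ∀ i : V, (Fintype.card V : ℚ) / (d : ℚ) ≤ ((π'.part i).card : ℚ) :=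
  stmt_8_general type d hd
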